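/- Let B be a Blaschke product with zero sequence (a_n), let B_1 ≡ 1 and for n ≥ 2 let B_n be the finite Blaschke product with zeros a_1,…,a_{n-1}, and set g_n(z) = B_n(z)·(1-|a_n|²)^{1/2}/(1 - conj(a_n)·z). Suppose (c_n) is a sequence of complex numbers with ∑_n |c_n|² < ∞ and f(z) = ∑_n c_n g_n(z) for all z ∈ U (f is an arbitrary element of the model space (BH²)^⊥). If α > -1 and 0 < p < 2/3 + (2/3)α, then f' belongs to A^p_α, i.e. ∬_U |f'(z)|^p (1-|z|)^α dA(z) < ∞. -/

import Mathlib

open Complex MeasureTheory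

noncomputable section

/-- The open unit disc in ℂ. -/
def unitDisc : Set ℂ := {z : ℂ | ‖z‖ < 1}

/-- A single Blaschke factor with zero `a`. -/
def bFactor (a z : ℂ) : ℂ :=
  ((starRingEnd ℂ) a / (‖a‖ : ℂ)) * ((a - z) / (1 - (starRingEnd ℂ) a * z))

/-- The Blaschke product with zeros `a n`. -/
def blaschke (a : ℕ → ℂ) (z : ℂ) : ℂ := ∏' n, bFactor (a n) z

/-- The pseudohyperbolic distance on the unit disc. -/
def pdist (z w : ℂ) : ℝ := ‖(z - w) / (1 - (starRingEnd ℂ) w * z)‖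

/-- The weighted Bergman integral `∬_U |g(z)|^p (1-|z|)^α dA(z)`;
`g ∈ A^p_α` means this is finite. -/
def bergman (g : ℂ → ℂ) (p α : ℝ) : ENNReal :=
  ∫⁻ z in unitDisc, ENNReal.ofReal (‖g z‖ ^ p * (1 - ‖z‖) ^ α)

/-- The finite subproduct `B_n` with zeros `a 0, …, a (n-1)` (`subProd a 0 = 1`). -/
def subProd (a : ℕ → ℂ) (n : ℕ) (z : ℂ) : ℂ := ∏ m ∈ Finset.range n, bFactor (a m) z

/-- The orthonormal basis functions `g_n(z) = B_n(z)·(1-|a_n|²)^{1/2}/(1 - conj(a_n)·z)`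
of the model space `(BH²)^⊥`. -/
def gfun (a : ℕ → ℂ) (n : ℕ) (z : ℂ) : ℂ :=
  subProd a n z * (Real.sqrt (1 - ‖a n‖ ^ 2) : ℂ) / (1 - (starRingEnd ℂ) (a n) * z)

/-!
The basis functions telescope: `(1 - |z|²)|g_n(z)|² = |B_n(z)|² - |B_{n+1}(z)|²`, so
`∑ |g_n(z)|² ≤ (1 - |z|²)⁻¹` and, by Cauchy–Schwarz, `|f(z)| ≤ ‖c‖₂ (1 - |z|)^{-1/2}`.
Cauchy's estimate on the disc of radius `(1 - |z|)/2` about `z` turns this into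
`|f'(z)| ≲ (1 - |z|)^{-3/2}`, and `(1 - |z|)^{α - 3p/2}` is integrable on the unit disc because
`α - 3p/2 > -1`.
-/

open scoped ComplexConjugate

lemma unitDisc_eq_ball : unitDisc = Metric.ball 0 1 := by
  ext z
  simp [unitDisc]

lemma norm_one_sub_conj_mul_sq_sub_norm_sub_sq (a z : ℂ) :
    ‖1 - conj a * z‖ ^ 2 - ‖a - z‖ ^ 2 = (1 - ‖a‖ ^ 2) * (1 - ‖z‖ ^ 2) := by
  simp only [← Complex.normSq_eq_norm_sq, Complex.normSq_apply, Complex.sub_re, Complex.sub_im,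
    Complex.mul_re, Complex.mul_im, Complex.one_re, Complex.one_im, Complex.conj_re,
    Complex.conj_im]
  ring

lemma one_sub_norm_le_norm_one_sub_conj_mul {a : ℂ} (ha : ‖a‖ ≤ 1) (z : ℂ) :
    1 - ‖z‖ ≤ ‖1 - conj a * z‖ := by
  have h := norm_sub_norm_le (1 : ℂ) (conj a * z)
  rw [norm_one, norm_mul, Complex.norm_conj] at h
  nlinarith [norm_nonneg z]

lemma norm_one_sub_conj_mul_pos {a z : ℂ} (ha : ‖a‖ ≤ 1) (hz : ‖z‖ < 1) :
    0 < ‖1 - conj a * z‖ :=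
  (sub_pos.mpr hz).trans_le (one_sub_norm_le_norm_one_sub_conj_mul ha z)

lemma norm_bFactor {a : ℂ} (ha : a ≠ 0) (z : ℂ) :
    ‖bFactor a z‖ = ‖a - z‖ / ‖1 - conj a * z‖ := by
  rw [bFactor, norm_mul, norm_div, norm_div, Complex.norm_conj,
    Complex.norm_of_nonneg (norm_nonneg a), div_self (norm_ne_zero_iff.mpr ha), one_mul]

lemma subProd_succ (a : ℕ → ℂ) (n : ℕ) (z : ℂ) :
    subProd a (n + 1) z = subProd a n z * bFactor (a n) z :=
  Finset.prod_range_succ _ _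

lemma summable_mul_and_tsum_mul_le_sqrt_mul_sqrt {ι : Type*} {f g : ι → ℝ} (hf : ∀ i, 0 ≤ f i)
    (hg : ∀ i, 0 ≤ g i) (hf2 : Summable fun i => f i ^ 2) (hg2 : Summable fun i => g i ^ 2) :
    (Summable fun i => f i * g i) ∧
      ∑' i, f i * g i ≤ √(∑' i, f i ^ 2) * √(∑' i, g i ^ 2) := by
  have h := Real.summable_and_inner_le_Lp_mul_Lq_tsum_of_nonneg Real.HolderConjugate.two_two hf hg
  simp only [Real.rpow_two, ← Real.sqrt_eq_rpow] at h
  exact h hf2 hg2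

section BasisFunctions

variable {a : ℕ → ℂ}

lemma one_sub_sq_mul_norm_gfun_sq (ha : ∀ n, 0 < ‖a n‖ ∧ ‖a n‖ < 1) (n : ℕ) {z : ℂ}
    (hz : ‖z‖ < 1) :
    (1 - ‖z‖ ^ 2) * ‖gfun a n z‖ ^ 2 = ‖subProd a n z‖ ^ 2 - ‖subProd a (n + 1) z‖ ^ 2 := by
  have hd : ‖1 - conj (a n) * z‖ ≠ 0 := (norm_one_sub_conj_mul_pos (ha n).2.le hz).ne'
  have hu : 0 ≤ 1 - ‖a n‖ ^ 2 := by nlinarith [(ha n).1, (ha n).2]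
  rw [gfun, subProd_succ, norm_div, norm_mul, norm_mul, norm_bFactor (norm_pos_iff.mp (ha n).1),
    Complex.norm_of_nonneg (Real.sqrt_nonneg _), div_pow, mul_pow, Real.sq_sqrt hu, mul_pow,
    div_pow]
  field_simp
  linear_combination -‖subProd a n z‖ ^ 2 * norm_one_sub_conj_mul_sq_sub_norm_sub_sq (a n) z

lemma one_sub_sq_mul_sum_norm_gfun_sq (ha : ∀ n, 0 < ‖a n‖ ∧ ‖a n‖ < 1) (N : ℕ) {z : ℂ}
    (hz : ‖z‖ < 1) :
    (1 - ‖z‖ ^ 2) * ∑ n ∈ Finset.range N, ‖gfun a n z‖ ^ 2 = 1 - ‖subProd a N z‖ ^ 2 := by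
  rw [Finset.mul_sum, Finset.sum_congr rfl fun n _ => one_sub_sq_mul_norm_gfun_sq ha n hz,
    Finset.sum_range_sub']
  simp [subProd]

lemma norm_subProd_le_one (ha : ∀ n, 0 < ‖a n‖ ∧ ‖a n‖ < 1) (N : ℕ) {z : ℂ} (hz : ‖z‖ < 1) :
    ‖subProd a N z‖ ≤ 1 := by
  have h := one_sub_sq_mul_sum_norm_gfun_sq ha N hz
  have : 0 ≤ (1 - ‖z‖ ^ 2) * ∑ n ∈ Finset.range N, ‖gfun a n z‖ ^ 2 :=
    mul_nonneg (by nlinarith [norm_nonneg z]) (Finset.sum_nonneg fun _ _ => sq_nonneg _)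
  exact (sq_le_one_iff₀ (norm_nonneg _)).mp (by linarith)

lemma sum_norm_gfun_sq_le (ha : ∀ n, 0 < ‖a n‖ ∧ ‖a n‖ < 1) {z : ℂ} (hz : ‖z‖ < 1) (N : ℕ) :
    ∑ n ∈ Finset.range N, ‖gfun a n z‖ ^ 2 ≤ (1 - ‖z‖ ^ 2)⁻¹ := by
  have hz2 : 0 < 1 - ‖z‖ ^ 2 := by nlinarith [norm_nonneg z]
  rw [← mul_one (1 - ‖z‖ ^ 2)⁻¹, le_inv_mul_iff₀ hz2, one_sub_sq_mul_sum_norm_gfun_sq ha N hz]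
  linarith [sq_nonneg ‖subProd a N z‖]

lemma summable_norm_gfun_sq (ha : ∀ n, 0 < ‖a n‖ ∧ ‖a n‖ < 1) {z : ℂ} (hz : ‖z‖ < 1) :
    Summable fun n => ‖gfun a n z‖ ^ 2 :=
  summable_of_sum_range_le (fun _ => sq_nonneg _) (sum_norm_gfun_sq_le ha hz)

lemma tsum_norm_gfun_sq_le (ha : ∀ n, 0 < ‖a n‖ ∧ ‖a n‖ < 1) {z : ℂ} (hz : ‖z‖ < 1) :
    ∑' n, ‖gfun a n z‖ ^ 2 ≤ (1 - ‖z‖ ^ 2)⁻¹ :=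
  Real.tsum_le_of_sum_range_le (fun _ => sq_nonneg _) (sum_norm_gfun_sq_le ha hz)

lemma norm_gfun_le (ha : ∀ n, 0 < ‖a n‖ ∧ ‖a n‖ < 1) (n : ℕ) {z : ℂ} (hz : ‖z‖ < 1) :
    ‖gfun a n z‖ ≤ √(1 - ‖a n‖ ^ 2) / (1 - ‖z‖) := by
  rw [gfun, norm_div, norm_mul, Complex.norm_of_nonneg (Real.sqrt_nonneg _)]
  exact div_le_div₀ (Real.sqrt_nonneg _)
    (mul_le_of_le_one_left (Real.sqrt_nonneg _) (norm_subProd_le_one ha n hz)) (sub_pos.mpr hz)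
    (one_sub_norm_le_norm_one_sub_conj_mul (ha n).2.le z)

lemma differentiableAt_gfun (ha : ∀ n, 0 < ‖a n‖ ∧ ‖a n‖ < 1) (n : ℕ) {z : ℂ} (hz : ‖z‖ < 1) :
    DifferentiableAt ℂ (gfun a n) z := by
  have hne : ∀ m, 1 - conj (a m) * z ≠ 0 := fun m =>
    norm_pos_iff.mp (norm_one_sub_conj_mul_pos (ha m).2.le hz)
  unfold gfun subProd bFactor
  fun_prop (disch := exact hne _)

variable {c : ℕ → ℂ}

lemma norm_tsum_mul_gfun_le (ha : ∀ n, 0 < ‖a n‖ ∧ ‖a n‖ < 1)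
    (hc : Summable fun n => ‖c n‖ ^ 2) {z : ℂ} (hz : ‖z‖ < 1) :
    ‖∑' n, c n * gfun a n z‖ ≤ √(∑' n, ‖c n‖ ^ 2) * (1 - ‖z‖) ^ (-(1 / 2 : ℝ)) := by
  obtain ⟨hsum, hCS⟩ := summable_mul_and_tsum_mul_le_sqrt_mul_sqrt (fun n => norm_nonneg (c n))
    (fun n => norm_nonneg (gfun a n z)) hc (summable_norm_gfun_sq ha hz)
  have hz1 : 0 < 1 - ‖z‖ := sub_pos.mpr hz
  have hz2 : 0 < 1 - ‖z‖ ^ 2 := by nlinarith [norm_nonneg z]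
  calc ‖∑' n, c n * gfun a n z‖ ≤ ∑' n, ‖c n‖ * ‖gfun a n z‖ := by
        simpa only [norm_mul] using norm_tsum_le_tsum_norm (f := fun n => c n * gfun a n z)
          (by simpa only [norm_mul] using hsum)
    _ ≤ √(∑' n, ‖c n‖ ^ 2) * √(∑' n, ‖gfun a n z‖ ^ 2) := hCS
    _ ≤ √(∑' n, ‖c n‖ ^ 2) * √((1 - ‖z‖ ^ 2)⁻¹) := by
        gcongr
        exact tsum_norm_gfun_sq_le ha hz
    _ ≤ √(∑' n, ‖c n‖ ^ 2) * (1 - ‖z‖) ^ (-(1 / 2 : ℝ)) := by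
        gcongr
        rw [Real.sqrt_eq_rpow, Real.inv_rpow hz2.le, ← Real.rpow_neg hz2.le]
        exact Real.rpow_le_rpow_of_nonpos hz1 (by nlinarith [norm_nonneg z]) (by norm_num)

lemma differentiableOn_tsum_mul_gfun (ha : ∀ n, 0 < ‖a n‖ ∧ ‖a n‖ < 1)
    (hblaschke : Summable fun n => 1 - ‖a n‖) (hc : Summable fun n => ‖c n‖ ^ 2) :
    DifferentiableOn ℂ (fun z => ∑' n, c n * gfun a n z) (Metric.ball 0 1) := by
  have hu : ∀ n, 0 ≤ 1 - ‖a n‖ ^ 2 := fun n => by nlinarith [(ha n).1, (ha n).2]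
  -- a summable bound for the terms on every smaller disc `‖z‖ < r`, divided by `1 - r`
  have hsum : Summable fun n => ‖c n‖ * √(1 - ‖a n‖ ^ 2) := by
    refine (summable_mul_and_tsum_mul_le_sqrt_mul_sqrt (fun n => norm_nonneg (c n))
      (fun n => Real.sqrt_nonneg _) hc ?_).1
    simp only [Real.sq_sqrt (hu _)]
    exact (hblaschke.mul_left 2).of_nonneg_of_le hu fun n => by nlinarith [(ha n).1, (ha n).2]
  refine differentiableOn_of_locally_differentiableOn fun z hz => ?_
  have hz1 : ‖z‖ < 1 := mem_ball_zero_iff.mp hz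
  obtain ⟨r, hzr, hr⟩ := exists_between hz1
  refine ⟨Metric.ball 0 r, Metric.isOpen_ball, mem_ball_zero_iff.mpr hzr, ?_⟩
  refine (Complex.differentiableOn_tsum_of_summable_norm (hsum.div_const (1 - r)) (fun n w hw =>
    ((differentiableAt_gfun ha n (mem_ball_zero_iff.mp hw.1)).const_mul (c n)
      ).differentiableWithinAt) (Metric.isOpen_ball.inter Metric.isOpen_ball) fun n w hw => ?_)
  have hw1 : ‖w‖ < 1 := mem_ball_zero_iff.mp hw.1
  have hwr : ‖w‖ < r := mem_ball_zero_iff.mp hw.2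
  rw [norm_mul, mul_div_assoc]
  gcongr
  exact (norm_gfun_le ha n hw1).trans (by gcongr)

end BasisFunctions

lemma norm_deriv_le_of_norm_le_one_sub_norm_rpow {f : ℂ → ℂ} {M s : ℝ} (hs : 0 ≤ s)
    (hf : DifferentiableOn ℂ f (Metric.ball 0 1))
    (hbound : ∀ w ∈ Metric.ball (0 : ℂ) 1, ‖f w‖ ≤ M * (1 - ‖w‖) ^ (-s))
    {z : ℂ} (hz : z ∈ Metric.ball (0 : ℂ) 1) :
    ‖deriv f z‖ ≤ 2 ^ (s + 1) * M * (1 - ‖z‖) ^ (-(s + 1)) := by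
  have hz1 : ‖z‖ < 1 := mem_ball_zero_iff.mp hz
  set R := (1 - ‖z‖) / 2 with hR_def
  have hR : 0 < R := by linarith
  have hM : 0 ≤ M := (mul_nonneg_iff_of_pos_right (Real.rpow_pos_of_pos (by linarith) _)).mp
    ((norm_nonneg _).trans (hbound z hz))
  have hnear : ∀ w, ‖w - z‖ ≤ R → ‖w‖ ≤ 1 - R := fun w hw => by
    linarith [norm_le_norm_add_norm_sub' w z]
  have hclosed : Metric.closedBall z R ⊆ Metric.ball 0 1 := fun w hw =>
    mem_ball_zero_iff.mpr ((hnear w (mem_closedBall_iff_norm.mp hw)).trans_lt (by linarith))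
  have hsphere : ∀ w ∈ Metric.sphere z R, ‖f w‖ ≤ M * R ^ (-s) := fun w hw => by
    have hwR := hnear w (mem_sphere_iff_norm.mp hw).le
    calc ‖f w‖ ≤ M * (1 - ‖w‖) ^ (-s) := hbound w (hclosed (Metric.sphere_subset_closedBall hw))
      _ ≤ M * R ^ (-s) := mul_le_mul_of_nonneg_left
          (Real.rpow_le_rpow_of_nonpos hR (by linarith) (neg_nonpos.mpr hs)) hM
  calc ‖deriv f z‖ ≤ M * R ^ (-s) / R :=
        Complex.norm_deriv_le_of_forall_mem_sphere_norm_le hR (hf.diffContOnCl_ball hclosed) hsphere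
    _ = 2 ^ (s + 1) * M * (1 - ‖z‖) ^ (-(s + 1)) := by
        rw [mul_div_assoc, ← Real.rpow_sub_one hR.ne', hR_def, show -s - 1 = -(s + 1) by ring,
          Real.div_rpow (by linarith) zero_le_two, Real.rpow_neg zero_le_two]
        field_simp

lemma integrableOn_one_sub_norm_rpow {E : Type*} [NormedAddCommGroup E] [NormedSpace ℝ E]
    [Nontrivial E] [FiniteDimensional ℝ E] [MeasurableSpace E] [BorelSpace E]
    (μ : Measure E) [μ.IsAddHaarMeasure] {β : ℝ} (hβ : -1 < β) :
    IntegrableOn (fun x : E => (1 - ‖x‖) ^ β) (Metric.ball 0 1) μ := by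
  rw [integrableOn_fun_norm_addHaar μ (f := fun y => (1 - y) ^ β)]
  have h : IntegrableOn (fun y : ℝ => (1 - y) ^ β) (Set.Icc 0 1) := by
    rw [integrableOn_Icc_iff_integrableOn_Ioc, ← intervalIntegrable_iff_integrableOn_Ioc_of_le
      zero_le_one]
    simpa using ((intervalIntegral.intervalIntegrable_rpow' hβ).comp_sub_left 1 (a := 1) (b := 0))
  exact ((h.continuousOn_mul (continuousOn_pow _) isCompact_Icc).mono_set
    Set.Ioo_subset_Icc_self)

lemma bergman_lt_top_of_norm_le {g : ℂ → ℂ} {M s p α : ℝ} (hp : 0 < p) (hM : 0 ≤ M)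
    (hg : ∀ z ∈ unitDisc, ‖g z‖ ≤ M * (1 - ‖z‖) ^ (-s)) (hα : -1 < α - s * p) :
    bergman g p α < ⊤ := by
  have hint : IntegrableOn (fun z : ℂ => M ^ p * (1 - ‖z‖) ^ (α - s * p)) unitDisc :=
    unitDisc_eq_ball ▸ (integrableOn_one_sub_norm_rpow volume hα).const_mul (M ^ p)
  refine lt_of_le_of_lt (setLIntegral_mono ?_ fun z hz => ENNReal.ofReal_le_ofReal ?_)
    hint.setLIntegral_lt_top
  · fun_prop
  have hz1 : 0 < 1 - ‖z‖ := sub_pos.mpr (mem_ball_zero_iff.mp (unitDisc_eq_ball ▸ hz))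
  calc ‖g z‖ ^ p * (1 - ‖z‖) ^ α ≤ (M * (1 - ‖z‖) ^ (-s)) ^ p * (1 - ‖z‖) ^ α := by
        gcongr
        exact hg z hz
    _ = M ^ p * (1 - ‖z‖) ^ (α - s * p) := by
        rw [Real.mul_rpow hM (Real.rpow_nonneg hz1.le _), ← Real.rpow_mul hz1.le, mul_assoc,
          ← Real.rpow_add hz1]
        ring_nf

theorem stmt3_general (a : ℕ → ℂ)
    (ha : ∀ n, 0 < ‖a n‖ ∧ ‖a n‖ < 1)
    (hblaschke : Summable (fun n => 1 - ‖a n‖))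
    (c : ℕ → ℂ) (hc : Summable (fun n => ‖c n‖ ^ 2))
    (f : ℂ → ℂ) (hf : ∀ z ∈ unitDisc, f z = ∑' n, c n * gfun a n z)
    (α p : ℝ) (hp₁ : 0 < p) (hp₂ : p < 2 / 3 + (2 / 3) * α) :
    bergman (deriv f) p α < ⊤ := by
  rw [unitDisc_eq_ball] at hf
  have hdiff : DifferentiableOn ℂ f (Metric.ball 0 1) :=
    (differentiableOn_tsum_mul_gfun ha hblaschke hc).congr hf
  have hgrowth : ∀ w ∈ Metric.ball (0 : ℂ) 1,
      ‖f w‖ ≤ √(∑' n, ‖c n‖ ^ 2) * (1 - ‖w‖) ^ (-(1 / 2 : ℝ)) := fun w hw => by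
    rw [hf w hw]
    exact norm_tsum_mul_gfun_le ha hc (mem_ball_zero_iff.mp hw)
  have hderiv : ∀ z ∈ unitDisc, ‖deriv f z‖ ≤
      2 ^ (1 / 2 + 1 : ℝ) * √(∑' n, ‖c n‖ ^ 2) * (1 - ‖z‖) ^ (-(1 / 2 + 1 : ℝ)) := fun z hz =>
    norm_deriv_le_of_norm_le_one_sub_norm_rpow (by norm_num) hdiff hgrowth (unitDisc_eq_ball ▸ hz)
  exact bergman_lt_top_of_norm_le hp₁ (by positivity) hderiv (by linarith)

/-- Theorem 4 (Protas): for any Blaschke product `B`, if `α > -1` and `0 < p < 2/3 + (2/3)α`,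
then `f' ∈ A^p_α` for all `f ∈ (BH²)^⊥`. -/
theorem stmt3 (a : ℕ → ℂ)
    (ha : ∀ n, 0 < ‖a n‖ ∧ ‖a n‖ < 1)
    (hblaschke : Summable (fun n => 1 - ‖a n‖))
    (c : ℕ → ℂ) (hc : Summable (fun n => ‖c n‖ ^ 2))
    (f : ℂ → ℂ) (hf : ∀ z ∈ unitDisc, f z = ∑' n, c n * gfun a n z)
    (α p : ℝ) (hα : -1 < α) (hp₁ : 0 < p) (hp₂ : p < 2 / 3 + (2 / 3) * α) :
    bergman (deriv f) p α < ⊤ :=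
  stmt3_general a ha hblaschke c hc f hf α p hp₁ hp₂
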